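/- Two cDGs D₁ and D₂ on the same node set, each containing every directed loop, are Markov equivalent if and only if they have the same directed edges and are collider equivalent. -/

import Mathlib

/-!
Markov equivalence determines the directed edges, since `a → b` is the only way to μ-connect
`a` to `b` given all other nodes, and it determines collider paths up to covering, by
conditioning on the ancestors of the nodes of a collider path other than its endpoints.
Conversely, a μ-connecting walk splits at its internal nodes outside the conditioning set `C`
into collider walks. Each of them is replaced by a covering collider path of the other graph,
whose internal nodes are ancestors of its endpoints or of `C`, and such a path can be rerouted
along directed paths into a μ-open walk.
-/

universe u

/-- A directed correlation graph (cDG): directed edges (loops allowed) and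
blunt edges (symmetric, no loops). -/
structure CDG (V : Type u) where
  dir : V → V → Prop
  blunt : V → V → Prop
  blunt_symm : ∀ a b, blunt a b → blunt b a
  blunt_irrefl : ∀ a, ¬ blunt a a

namespace CDG

variable {V : Type u}

/-- `anc D a b` : `a` is an ancestor of `b` (directed path from `a` to `b`;
every node is its own ancestor). -/
def anc (D : CDG V) (a b : V) : Prop := Relation.ReflTransGen D.dir a b

/-- `an(C)`: the set of ancestors of `C`. -/
def ancSet (D : CDG V) (C : Set V) : Set V := {a | ∃ c ∈ C, D.anc a c}

/-- An edge instance between `a` and `b`, with its orientation. -/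
inductive Edge (D : CDG V) : V → V → Type u
  | fwd {a b : V} : D.dir a b → Edge D a b
  | bwd {a b : V} : D.dir b a → Edge D a b
  | bl  {a b : V} : D.blunt a b → Edge D a b

/-- The edge has a neck (head or stump) at its left endpoint. -/
def Edge.neckLeft {D : CDG V} {a b : V} : D.Edge a b → Prop
  | .fwd _ => False
  | .bwd _ => True
  | .bl _ => True

/-- The edge has a neck (head or stump) at its right endpoint. -/
def Edge.neckRight {D : CDG V} {a b : V} : D.Edge a b → Prop
  | .fwd _ => True
  | .bwd _ => False
  | .bl _ => True

/-- The edge has a head (arrowhead) at its right endpoint. -/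
def Edge.headRight {D : CDG V} {a b : V} : D.Edge a b → Prop
  | .fwd _ => True
  | _ => False

/-- The edge is a blunt edge. -/
def Edge.isBlunt {D : CDG V} {a b : V} : D.Edge a b → Prop
  | .bl _ => True
  | _ => False

/-- A walk from `a` to `b` in `D`. -/
inductive Walk (D : CDG V) : V → V → Type u
  | nil (a : V) : Walk D a a
  | cons {a m c : V} : D.Edge a m → Walk D m c → Walk D a c

namespace Walk

variable {D : CDG V}

def length : ∀ {a b : V}, D.Walk a b → ℕ
  | _, _, .nil _ => 0
  | _, _, .cons _ w => w.length + 1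

def support : ∀ {a b : V}, D.Walk a b → List V
  | a, _, .nil _ => [a]
  | a, _, .cons _ w => a :: w.support

/-- The list of nonendpoint (internal) node instances of a walk. -/
def internal : ∀ {a b : V}, D.Walk a b → List V
  | _, _, .nil _ => []
  | _, _, .cons _ (.nil _) => []
  | _, _, .cons (m := m) _ w => m :: w.internal

/-- The final edge of the walk has a head at the terminal node. -/
def lastHead : ∀ {a b : V}, D.Walk a b → Prop
  | _, _, .nil _ => False
  | _, _, .cons e (.nil _) => e.headRight
  | _, _, .cons _ w => w.lastHead

/-- Every collider on the walk is in `an(C)` and no noncollider is in `C`. -/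
def mOpen (C : Set V) : ∀ {a b : V}, D.Walk a b → Prop
  | _, _, .nil _ => True
  | _, _, .cons _ (.nil _) => True
  | _, _, .cons (m := m) e₁ (.cons e₂ w) =>
      ((e₁.neckRight ∧ e₂.neckLeft) → m ∈ D.ancSet C) ∧
      (¬ (e₁.neckRight ∧ e₂.neckLeft) → m ∉ C) ∧
      mOpen C (Walk.cons e₂ w)

/-- Every nonendpoint node of the walk is a collider. -/
def allColliders : ∀ {a b : V}, D.Walk a b → Prop
  | _, _, .nil _ => True
  | _, _, .cons _ (.nil _) => True
  | _, _, .cons e₁ (.cons e₂ w) =>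
      e₁.neckRight ∧ e₂.neckLeft ∧ allColliders (Walk.cons e₂ w)

/-- Every edge of the walk is blunt. -/
def allBlunt : ∀ {a b : V}, D.Walk a b → Prop
  | _, _, .nil _ => True
  | _, _, .cons e w => e.isBlunt ∧ w.allBlunt

end Walk

/-- There is a μ-connecting walk from `a` to `b` given `C`. -/
def muConn (D : CDG V) (C : Set V) (a b : V) : Prop :=
  a ∉ C ∧ ∃ w : D.Walk a b, w.mOpen C ∧ w.lastHead

/-- `B` is μ-separated from `A` given `C`. -/
def muSep (D : CDG V) (A B C : Set V) : Prop :=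
  ∀ a ∈ A, ∀ b ∈ B, ¬ D.muConn C a b

/-- The independence model of `D`: all μ-separation triples. -/
def indep (D : CDG V) : Set (Set V × Set V × Set V) :=
  {p | D.muSep p.1 p.2.1 p.2.2}

/-- A (nontrivial) collider path. -/
def IsColliderPath {D : CDG V} {a b : V} (w : D.Walk a b) : Prop :=
  0 < w.length ∧ w.support.Nodup ∧ w.allColliders

/-- `a` and `b` are collider connected: some nontrivial walk between them has
every nonendpoint node a collider. -/
def colliderConn (D : CDG V) (a b : V) : Prop :=
  ∃ w : D.Walk a b, 0 < w.length ∧ w.allColliders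

/-- A weak inducing path from `a` to `b`: a collider path whose nonendpoint
nodes are all ancestors of `a` or of `b`. -/
def WeakInducing (D : CDG V) (a b : V) : Prop :=
  ∃ w : D.Walk a b, IsColliderPath w ∧ ∀ m ∈ w.internal, D.anc m a ∨ D.anc m b

/-- A weak inducing path between `a` and `b` (in either direction). -/
def WeakInducingBetween (D : CDG V) (a b : V) : Prop :=
  D.WeakInducing a b ∨ D.WeakInducing b a

end CDG

/-- A collider path `w` in `D₁` from α to β is covered in `D₂`. -/
def Covered {V : Type} (D₁ D₂ : CDG V) {α β : V} (w : D₁.Walk α β) : Prop :=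
  ∃ w' : D₂.Walk α β, CDG.IsColliderPath w' ∧
    ∀ m ∈ w'.internal, m ∈ D₁.ancSet ({α, β} ∪ {x | x ∈ w.internal})

/-- Collider equivalence of two cDGs with the same directed edges. -/
def ColliderEquiv {V : Type} (D₁ D₂ : CDG V) : Prop :=
  (∀ (α β : V) (w : D₁.Walk α β), CDG.IsColliderPath w → Covered D₁ D₂ w) ∧
  (∀ (α β : V) (w : D₂.Walk α β), CDG.IsColliderPath w → Covered D₂ D₁ w)

namespace CDG

variable {V : Type u} {D : CDG V}

namespace Walk

def append : ∀ {a m c : V}, D.Walk a m → D.Walk m c → D.Walk a c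
  | _, _, _, .nil _, w₂ => w₂
  | _, _, _, .cons e w, w₂ => .cons e (append w w₂)

def endNeck : ∀ {a b : V}, Prop → D.Walk a b → Prop
  | _, _, q, .nil _ => q
  | _, _, _, .cons e w => endNeck e.neckRight w

/-- `w.Junctions J q` imposes `J v i o` at every node `v` of `w` except the last, where `i`
says whether the edge entering `v` has a neck at `v` and `o` whether the edge leaving `v`
does. The flag `q` plays the role of `i` at the first node, so that a walk can be checked
piece by piece (`junctions_append`). -/
def Junctions (J : V → Prop → Prop → Prop) : ∀ {a b : V}, Prop → D.Walk a b → Prop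
  | _, _, _, .nil _ => True
  | a, _, q, .cons e w => J a q e.neckLeft ∧ Junctions J e.neckRight w

def MuOpen (C : Set V) {a b : V} (q : Prop) (w : D.Walk a b) : Prop :=
  w.Junctions (fun v i o => (i ∧ o → v ∈ D.ancSet C) ∧ (¬(i ∧ o) → v ∉ C)) q

def Colliding {a b : V} (q : Prop) (w : D.Walk a b) : Prop :=
  w.Junctions (fun _ i o => i ∧ o) q

variable {a b c m : V}

@[simp] lemma nil_append (w : D.Walk a b) : (nil a).append w = w := rfl

@[simp] lemma cons_append (e : D.Edge a m) (w₁ : D.Walk m c) (w₂ : D.Walk c b) :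
    (cons e w₁).append w₂ = cons e (w₁.append w₂) := rfl

@[simp] lemma append_nil : ∀ {a b : V} (w : D.Walk a b), w.append (nil b) = w
  | _, _, .nil _ => rfl
  | _, _, .cons e w => by rw [cons_append, append_nil w]

lemma append_assoc : ∀ {a b c d : V} (w₁ : D.Walk a b) (w₂ : D.Walk b c) (w₃ : D.Walk c d),
    (w₁.append w₂).append w₃ = w₁.append (w₂.append w₃)
  | _, _, _, _, .nil _, _, _ => rfl
  | _, _, _, _, .cons e w, w₂, w₃ => by simp only [cons_append, append_assoc w w₂ w₃]

@[simp] lemma length_cons (e : D.Edge a m) (w : D.Walk m b) :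
    (cons e w).length = w.length + 1 := rfl

@[simp] lemma length_append : ∀ {a b c : V} (w₁ : D.Walk a b) (w₂ : D.Walk b c),
    (w₁.append w₂).length = w₁.length + w₂.length
  | _, _, _, .nil _, w₂ => by simp [length]
  | _, _, _, .cons e w, w₂ => by simp [length_append w w₂]; omega

lemma eq_of_length_eq_zero : ∀ {a b : V} (w : D.Walk a b), w.length = 0 → a = b
  | _, _, .nil _, _ => rfl

lemma length_pos_of_ne {w : D.Walk a b} (h : a ≠ b) : 0 < w.length :=
  Nat.pos_of_ne_zero fun h0 => h (eq_of_length_eq_zero w h0)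

lemma junctions_append {J : V → Prop → Prop → Prop} : ∀ {a b c : V} (w₁ : D.Walk a b)
    (w₂ : D.Walk b c) (q : Prop),
    (w₁.append w₂).Junctions J q ↔ w₁.Junctions J q ∧ w₂.Junctions J (w₁.endNeck q)
  | _, _, _, .nil _, _, _ => by simp [Junctions, endNeck]
  | _, _, _, .cons e w, w₂, _ => by
      simp only [cons_append, Junctions, endNeck, junctions_append w w₂, and_assoc]

lemma muOpen_append {C : Set V} {q : Prop} (w₁ : D.Walk a b) (w₂ : D.Walk b c) :
    (w₁.append w₂).MuOpen C q ↔ w₁.MuOpen C q ∧ w₂.MuOpen C (w₁.endNeck q) :=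
  junctions_append w₁ w₂ q

lemma colliding_append {q : Prop} (w₁ : D.Walk a b) (w₂ : D.Walk b c) :
    (w₁.append w₂).Colliding q ↔ w₁.Colliding q ∧ w₂.Colliding (w₁.endNeck q) :=
  junctions_append w₁ w₂ q

@[simp] lemma support_cons (e : D.Edge a m) (w : D.Walk m b) :
    (cons e w).support = a :: w.support := rfl

lemma support_ne_nil : ∀ {a b : V} (w : D.Walk a b), w.support ≠ []
  | _, _, .nil _ => List.cons_ne_nil _ _
  | _, _, .cons _ _ => List.cons_ne_nil _ _

lemma start_mem_support : ∀ {a b : V} (w : D.Walk a b), a ∈ w.support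
  | _, _, .nil _ => List.mem_singleton_self _
  | _, _, .cons _ _ => List.mem_cons_self

lemma mem_support_append : ∀ {a b c : V} (w₁ : D.Walk a b) (w₂ : D.Walk b c) {x : V},
    x ∈ (w₁.append w₂).support ↔ x ∈ w₁.support ∨ x ∈ w₂.support
  | _, _, _, .nil _, w₂, x => by
      simp only [nil_append, support, List.mem_singleton, iff_or_self]
      rintro rfl; exact start_mem_support w₂
  | _, _, _, .cons e w, w₂, x => by
      simp only [cons_append, support_cons, List.mem_cons, mem_support_append w w₂, or_assoc]

lemma support_dropLast_append : ∀ {a b : V} (w : D.Walk a b),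
    w.support.dropLast ++ [b] = w.support
  | _, _, .nil _ => rfl
  | _, _, .cons e w => by
      rw [support_cons, List.dropLast_cons_of_ne_nil (support_ne_nil w), List.cons_append,
        support_dropLast_append w]

lemma internal_cons : ∀ {a m b : V} (e : D.Edge a m) (w : D.Walk m b),
    (cons e w).internal = w.support.dropLast
  | _, _, _, _, .nil _ => rfl
  | _, _, _, _, .cons e₂ w => by
      rw [support_cons, List.dropLast_cons_of_ne_nil (support_ne_nil w), ← internal_cons e₂ w]
      rfl

lemma mem_internal_cons {e : D.Edge a m} {w : D.Walk m b} {x : V} :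
    x ∈ (cons e w).internal ↔ x = m ∧ 0 < w.length ∨ x ∈ w.internal := by
  cases w <;> simp [internal, length]

lemma mem_support_iff {w : D.Walk a b} {x : V} :
    x ∈ w.support ↔ x = a ∨ x ∈ w.internal ∨ x = b := by
  cases w with
  | nil => simp [support, internal]
  | cons e w =>
      rw [support_cons, internal_cons, List.mem_cons, ← support_dropLast_append w]
      simp

lemma mem_support_of_mem_internal {w : D.Walk a b} {x : V} (h : x ∈ w.internal) :
    x ∈ w.support :=
  mem_support_iff.2 (Or.inr (Or.inl h))

lemma mem_internal_append_right : ∀ {a b c : V} (w₁ : D.Walk a b) (w₂ : D.Walk b c) {x : V},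
    x ∈ w₂.internal → x ∈ (w₁.append w₂).internal
  | _, _, _, .nil _, _, _, h => h
  | _, _, _, .cons _ w, w₂, _, h =>
      mem_internal_cons.2 (Or.inr (mem_internal_append_right w w₂ h))

lemma support_eq_cons_internal {w : D.Walk a b} (hw : 0 < w.length) :
    w.support = a :: (w.internal ++ [b]) := by
  cases w with
  | nil => simp [length] at hw
  | cons e w => rw [support_cons, internal_cons, support_dropLast_append]

lemma ne_and_not_mem_internal_of_nodup {w : D.Walk a b} (hw : 0 < w.length)
    (hnd : w.support.Nodup) : a ≠ b ∧ a ∉ w.internal ∧ b ∉ w.internal := by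
  rw [support_eq_cons_internal hw] at hnd
  simp only [List.nodup_cons, List.nodup_append, List.mem_append, List.mem_singleton] at hnd
  grind

lemma mem_internal_or_eq_of_mem_support_tail {w : D.Walk a b} {x : V}
    (hx : x ∈ w.support.tail) : x ∈ w.internal ∨ x = b := by
  cases w with
  | nil => simp [support] at hx
  | cons e w =>
      rw [support_cons, List.tail_cons, ← support_dropLast_append w] at hx
      rw [internal_cons]
      simpa using hx

/-! ### Decompositions of walks -/

lemma exists_eq_append_of_mem_support : ∀ {a b v : V} (w : D.Walk a b), v ∈ w.support →
    ∃ (w₁ : D.Walk a v) (w₂ : D.Walk v b), w = w₁.append w₂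
  | _, _, _, .nil _, h => by
      rw [List.mem_singleton.1 h]; exact ⟨nil _, nil _, rfl⟩
  | _, _, _, .cons e w, h => by
      rcases List.mem_cons.1 h with rfl | h
      · exact ⟨nil _, cons e w, rfl⟩
      · obtain ⟨w₁, w₂, rfl⟩ := exists_eq_append_of_mem_support w h
        exact ⟨cons e w₁, w₂, rfl⟩

lemma exists_eq_append_of_mem_internal : ∀ {a b v : V} (w : D.Walk a b), v ∈ w.internal →
    ∃ (w₁ : D.Walk a v) (w₂ : D.Walk v b), w = w₁.append w₂ ∧ 0 < w₁.length ∧ 0 < w₂.length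
  | _, _, _, .nil _, h => by simp [internal] at h
  | _, _, _, .cons e w, h => by
      rcases mem_internal_cons.1 h with ⟨rfl, hw⟩ | h
      · exact ⟨cons e (nil _), w, rfl, Nat.succ_pos _, hw⟩
      · obtain ⟨w₁, w₂, rfl, -, hw₂⟩ := exists_eq_append_of_mem_internal w h
        exact ⟨cons e w₁, w₂, rfl, Nat.succ_pos _, hw₂⟩

lemma exists_eq_append_loop_of_not_nodup : ∀ {a b : V} (w : D.Walk a b), ¬ w.support.Nodup →
    ∃ (v : V) (w₁ : D.Walk a v) (w₂ : D.Walk v v) (w₃ : D.Walk v b),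
      w = w₁.append (w₂.append w₃) ∧ 0 < w₂.length
  | _, _, .nil _, h => absurd (List.nodup_singleton _) h
  | a, _, .cons e w, h => by
      rw [support_cons, List.nodup_cons, not_and_or, not_not] at h
      rcases h with ha | h
      · obtain ⟨w₁, w₂, rfl⟩ := exists_eq_append_of_mem_support w ha
        exact ⟨a, nil a, cons e w₁, w₂, rfl, Nat.succ_pos _⟩
      · obtain ⟨v, w₁, w₂, w₃, rfl, hw₂⟩ := exists_eq_append_loop_of_not_nodup w h
        exact ⟨v, cons e w₁, w₂, w₃, rfl, hw₂⟩

lemma exists_eq_append_first_not (P : V → Prop) {a b : V} (w : D.Walk a b)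
    (h : ∃ v ∈ w.internal, ¬ P v) :
    ∃ (v : V) (w₁ : D.Walk a v) (w₂ : D.Walk v b), w = w₁.append w₂ ∧ ¬ P v ∧
      0 < w₁.length ∧ 0 < w₂.length ∧ ∀ x ∈ w₁.internal, P x := by
  obtain ⟨n, hn⟩ : ∃ n, w.length = n := ⟨_, rfl⟩
  induction n using Nat.strong_induction_on generalizing b with
  | _ n ih =>
    obtain ⟨v, hv, hPv⟩ := h
    obtain ⟨w₁, w₂, rfl, hw₁', hw₂⟩ := exists_eq_append_of_mem_internal w hv
    by_cases hw₁ : ∀ x ∈ w₁.internal, P x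
    · exact ⟨v, w₁, w₂, rfl, hPv, hw₁', hw₂, hw₁⟩
    · push Not at hw₁
      obtain ⟨v', w₁₁, w₁₂, rfl, hPv', hw₁₁, hw₁₂, hP⟩ :=
        ih _ (by simp only [length_append] at hn; omega) w₁ hw₁ rfl
      exact ⟨v', w₁₁, w₁₂.append w₂, append_assoc _ _ _, hPv', hw₁₁, by simp; omega, hP⟩

lemma exists_infix_internal_ne {a b : V} (hab : a ≠ b) (w : D.Walk a b) :
    ∃ (w₁ : D.Walk a a) (w' : D.Walk a b) (w₂ : D.Walk b b),
      w = w₁.append (w'.append w₂) ∧ ∀ v ∈ w'.internal, v ≠ a ∧ v ≠ b := by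
  obtain ⟨n, hn⟩ : ∃ n, w.length = n := ⟨_, rfl⟩
  induction n using Nat.strong_induction_on generalizing w with
  | _ n ih =>
    by_cases hw : ∀ v ∈ w.internal, v ≠ a ∧ v ≠ b
    · exact ⟨nil a, w, nil b, by simp, hw⟩
    · push Not at hw
      obtain ⟨v, hv, hvab⟩ := hw
      obtain ⟨w₁, w₂, rfl, hw₁, hw₂⟩ := exists_eq_append_of_mem_internal w hv
      simp only [length_append] at hn
      by_cases hva : v = a
      · subst hva
        obtain ⟨x₁, w', x₂, rfl, hw'⟩ := ih _ (by omega) w₂ rfl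
        exact ⟨w₁.append x₁, w', x₂, by rw [append_assoc], hw'⟩
      · obtain rfl := hvab hva
        obtain ⟨x₁, w', x₂, rfl, hw'⟩ := ih _ (by omega) w₁ rfl
        exact ⟨x₁, w', x₂.append w₂, by simp only [append_assoc], hw'⟩

lemma exists_eq_append_last (P : V → Prop) : ∀ {a b : V} (w : D.Walk a b),
    (∀ x ∈ w.support, ¬ P x) ∨ ∃ (v : V) (w₁ : D.Walk a v) (w₂ : D.Walk v b),
      w = w₁.append w₂ ∧ P v ∧ ∀ x ∈ w₂.support.tail, ¬ P x
  | a, _, .nil _ => by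
      by_cases h : P a
      · exact Or.inr ⟨a, nil a, nil a, rfl, h, by simp [support]⟩
      · exact Or.inl (by simpa [support] using h)
  | a, _, .cons e w => by
      rcases exists_eq_append_last P w with hw | ⟨v, w₁, w₂, rfl, hv, hw₂⟩
      · by_cases h : P a
        · exact Or.inr ⟨a, nil a, cons e w, rfl, h, hw⟩
        · exact Or.inl fun x hx => (List.mem_cons.1 hx).elim (· ▸ h) (hw x)
      · exact Or.inr ⟨v, cons e w₁, w₂, rfl, hv, hw₂⟩

lemma lastHead_cons_iff {e : D.Edge a m} {w : D.Walk m b} (hw : 0 < w.length) :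
    (cons e w).lastHead ↔ w.lastHead := by
  cases w with
  | nil => simp [length] at hw
  | cons => rfl

lemma length_pos_of_lastHead : ∀ {a b : V} {w : D.Walk a b}, w.lastHead → 0 < w.length
  | _, _, .cons _ _, _ => Nat.succ_pos _

lemma lastHead_append_iff : ∀ {a b c : V} (w₁ : D.Walk a b) {w₂ : D.Walk b c},
    0 < w₂.length → ((w₁.append w₂).lastHead ↔ w₂.lastHead)
  | _, _, _, .nil _, _, _ => Iff.rfl
  | _, _, _, .cons _ w, w₂, h => by
      rw [cons_append, lastHead_cons_iff (by simp; omega), lastHead_append_iff w h]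

/-! ### Collider walks -/

lemma junctions_imp {J J' : V → Prop → Prop → Prop} : ∀ {a b : V} {w : D.Walk a b} {q : Prop},
    (∀ v ∈ w.support.dropLast, ∀ i o, J v i o → J' v i o) →
      w.Junctions J q → w.Junctions J' q
  | _, _, .nil _, _, _, _ => trivial
  | _, _, .cons _ w, _, hJ, h => by
      rw [support_cons, List.dropLast_cons_of_ne_nil (support_ne_nil w)] at hJ
      exact ⟨hJ _ List.mem_cons_self _ _ h.1,
        junctions_imp (fun v hv => hJ v (List.mem_cons_of_mem _ hv)) h.2⟩

lemma mOpen_cons_iff {C : Set V} : ∀ {a m b : V} (e : D.Edge a m) (w : D.Walk m b),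
    (cons e w).mOpen C ↔ w.MuOpen C e.neckRight
  | _, _, _, _, .nil _ => by simp [mOpen, MuOpen, Junctions]
  | _, _, _, _, .cons e₂ w => by
      simp only [mOpen, MuOpen, Junctions] at *
      rw [mOpen_cons_iff e₂ w]
      exact and_assoc.symm

lemma allColliders_cons_iff : ∀ {a m b : V} (e : D.Edge a m) (w : D.Walk m b),
    (cons e w).allColliders ↔ w.Colliding e.neckRight
  | _, _, _, _, .nil _ => by simp [allColliders, Colliding, Junctions]
  | _, _, _, _, .cons e₂ w => by
      simp only [allColliders, Colliding, Junctions] at *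
      rw [allColliders_cons_iff e₂ w]
      exact and_assoc.symm

lemma Colliding.allColliders {q : Prop} : ∀ {w : D.Walk a b}, w.Colliding q → w.allColliders
  | .nil _, _ => trivial
  | .cons e w, h => (allColliders_cons_iff e w).2 h.2

lemma allColliders_append_right : ∀ {a b c : V} (w₁ : D.Walk a b) {w₂ : D.Walk b c},
    (w₁.append w₂).allColliders → w₂.allColliders
  | _, _, _, .nil _, _, h => h
  | _, _, _, .cons e w, w₂, h => by
      rw [cons_append, allColliders_cons_iff, colliding_append] at h
      exact h.2.allColliders

/-- The node where the loop is cut out was a collider both on entering and on leaving the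
loop. -/
lemma allColliders_append_of_loop {v : V} (w₁ : D.Walk a v) {w₂ : D.Walk v v}
    (w₃ : D.Walk v b) (hw₂ : 0 < w₂.length) (h : (w₁.append (w₂.append w₃)).allColliders) :
    (w₁.append w₃).allColliders := by
  cases w₁ with
  | nil => exact allColliders_append_right w₂ h
  | cons e w₁ =>
      rw [cons_append, allColliders_cons_iff, colliding_append, colliding_append] at h
      rw [cons_append, allColliders_cons_iff, colliding_append]
      obtain ⟨h₁, h₂, h₃⟩ := h
      refine ⟨h₁, ?_⟩
      cases w₂ with
      | nil => simp [length] at hw₂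
      | cons e₂ w₂ =>
          cases w₃ with
          | nil => trivial
          | cons e₃ w₃ => exact ⟨⟨h₂.1.1, h₃.1.2⟩, h₃.2⟩

lemma exists_isColliderPath {a b : V} (hab : a ≠ b) (w : D.Walk a b) (hw : w.allColliders) :
    ∃ w' : D.Walk a b, IsColliderPath w' ∧ ∀ x ∈ w'.support, x ∈ w.support := by
  obtain ⟨n, hn⟩ : ∃ n, w.length = n := ⟨_, rfl⟩
  induction n using Nat.strong_induction_on generalizing w with
  | _ n ih =>
    by_cases hnd : w.support.Nodup
    · exact ⟨w, ⟨length_pos_of_ne hab, hnd, hw⟩, fun _ => id⟩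
    · obtain ⟨v, w₁, w₂, w₃, rfl, hw₂⟩ := exists_eq_append_loop_of_not_nodup w hnd
      obtain ⟨w', hw', hsupp⟩ := ih _ (by simp only [length_append] at hn ⊢; omega)
        (w₁.append w₃) (allColliders_append_of_loop w₁ w₃ hw₂ hw) rfl
      refine ⟨w', hw', fun x hx => ?_⟩
      have := hsupp x hx
      simp only [mem_support_append] at this ⊢
      tauto

lemma not_lastHead_of_colliding {q : Prop} : ∀ {a b : V} {w : D.Walk a b},
    w.Colliding q → ¬ w.lastHead
  | _, _, .nil _, _, h => h
  | _, _, .cons (.fwd _) (.nil _), h, _ => h.1.2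
  | _, _, .cons (.bwd _) (.nil _), _, h => h
  | _, _, .cons (.bl _) (.nil _), _, h => h
  | _, _, .cons _ (.cons _ _), h, hl => not_lastHead_of_colliding h.2 hl

lemma eq_cons_fwd_of_allColliders_of_lastHead : ∀ {a b : V} {w : D.Walk a b},
    w.allColliders → w.lastHead → ∃ h : D.dir a b, w = cons (.fwd h) (nil b)
  | _, _, .cons (.fwd h) (.nil _), _, _ => ⟨h, rfl⟩
  | _, _, .cons (.bwd _) (.nil _), _, h => h.elim
  | _, _, .cons (.bl _) (.nil _), _, h => h.elim
  | _, _, .cons e (.cons _ _), h, hl =>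
      ((not_lastHead_of_colliding ((allColliders_cons_iff e _).1 h)) hl).elim

variable {C : Set V}

lemma muOpen_false_of_allColliders {w : D.Walk a b} (hw : w.allColliders)
    (hint : ∀ v ∈ w.internal, v ∈ D.ancSet C) (ha : a ∉ C) : w.MuOpen C False := by
  cases w with
  | nil => trivial
  | cons e w =>
      refine ⟨⟨fun h => h.1.elim, fun _ => ha⟩, junctions_imp ?_ ((allColliders_cons_iff e w).1 hw)⟩
      rw [← internal_cons e]
      exact fun v hv i o _ => ⟨fun _ => hint v hv, fun hio => (hio ‹_›).elim⟩

lemma allColliders_of_muOpen {q : Prop} {w : D.Walk a b} (hw : w.MuOpen C q)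
    (hint : ∀ v ∈ w.internal, v ∈ C) : w.allColliders := by
  cases w with
  | nil => trivial
  | cons e w =>
      refine (allColliders_cons_iff e w).2 (junctions_imp ?_ hw.2)
      rw [← internal_cons e]
      exact fun v hv i o h => by_contra fun hio => h.2 hio (hint v hv)

lemma endNeck_or_mem_ancSet : ∀ {a b : V} {w : D.Walk a b} (q : Prop),
    1 < w.length → (∀ v ∈ w.internal, v ∈ C) → w.endNeck q ∨ b ∈ D.ancSet C
  | _, _, .nil _, _, h, _ => absurd h (by simp [length])
  | _, _, .cons _ (.nil _), _, h, _ => absurd h (by simp [length])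
  | _, _, .cons _ (.cons (.fwd _) (.nil _)), _, _, _ => Or.inl trivial
  | _, _, .cons _ (.cons (.bl _) (.nil _)), _, _, _ => Or.inl trivial
  | _, _, .cons _ (.cons (.bwd h) (.nil _)), _, _, hC =>
      Or.inr ⟨_, hC _ (List.mem_singleton_self _), .single h⟩
  | _, _, .cons e (.cons _ (.cons _ _)), _, _, hC =>
      endNeck_or_mem_ancSet e.neckRight (by simp) fun v hv => hC v (mem_internal_cons.2 (Or.inr hv))

end Walk

open Walk

section Ancestors

variable {S T : Set V}

lemma subset_ancSet : S ⊆ D.ancSet S := fun c hc => ⟨c, hc, .refl⟩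

lemma mem_ancSet_of_anc {x y : V} (h : D.anc x y) (hy : y ∈ D.ancSet S) : x ∈ D.ancSet S :=
  let ⟨c, hc, hyc⟩ := hy
  ⟨c, hc, h.trans hyc⟩

lemma mem_ancSet_of_dir {x y : V} (h : D.dir x y) (hy : y ∈ D.ancSet S) : x ∈ D.ancSet S :=
  mem_ancSet_of_anc (.single h) hy

lemma ancSet_subset_ancSet (h : T ⊆ D.ancSet S) : D.ancSet T ⊆ D.ancSet S :=
  fun _ ⟨_, hc, hxc⟩ => mem_ancSet_of_anc hxc (h hc)

lemma anc_congr {G H : CDG V} (h : ∀ a b, G.dir a b ↔ H.dir a b) : G.anc = H.anc := by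
  have : G.dir = H.dir := funext₂ fun a b => propext (h a b)
  unfold anc
  rw [this]

lemma ancSet_congr {G H : CDG V} (h : ∀ a b, G.dir a b ↔ H.dir a b) : G.ancSet = H.ancSet := by
  unfold ancSet
  rw [anc_congr h]

end Ancestors

/-! ### μ-open walks -/

lemma Edge.neckLeft_or_dir {a b : V} : (e : D.Edge a b) → e.neckLeft ∨ D.dir a b
  | .fwd h => Or.inr h
  | .bwd _ => Or.inl trivial
  | .bl _ => Or.inl trivial

variable {C : Set V} {a b : V}

lemma mOpen_iff_muOpen {w : D.Walk a b} (ha : a ∉ C) : w.mOpen C ↔ w.MuOpen C False := by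
  cases w with
  | nil => exact Iff.rfl
  | cons e w =>
      rw [mOpen_cons_iff]
      exact ⟨fun h => ⟨⟨fun h => h.1.elim, fun _ => ha⟩, h⟩, fun h => h.2⟩

lemma muConn_iff : D.muConn C a b ↔ a ∉ C ∧ ∃ w : D.Walk a b, w.MuOpen C False ∧ w.lastHead :=
  and_congr_right fun ha => exists_congr fun _ => and_congr_left' (mOpen_iff_muOpen ha)

/-- The loop at `b` supplies the arrowhead at `b`. -/
lemma muConn_of_allColliders {w : D.Walk a b} (hw : w.allColliders)
    (hint : ∀ v ∈ w.internal, v ∈ D.ancSet C) (ha : a ∉ C) (hb : b ∉ C) (hloop : D.dir b b) :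
    D.muConn C a b := by
  let loop : D.Walk b b := cons (.fwd hloop) (nil b)
  exact muConn_iff.2 ⟨ha, w.append loop, (muOpen_append w loop).2
    ⟨muOpen_false_of_allColliders hw hint ha, ⟨fun h => h.2.elim, fun _ => hb⟩, trivial⟩,
    (lastHead_append_iff w (w₂ := loop) (Nat.succ_pos 0)).2 trivial⟩

lemma indep_eq_iff {G H : CDG V} :
    G.indep = H.indep ↔ ∀ C a b, G.muConn C a b ↔ H.muConn C a b := by
  constructor
  · intro h C a b
    simpa [indep, muSep, not_iff_not] using Set.ext_iff.1 h ({a}, {b}, C)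
  · intro h
    ext
    simp [indep, muSep, h]

lemma dir_of_muOpen_of_lastHead : ∀ {u : V} {w : D.Walk u b} {q : Prop},
    w.MuOpen {x | x ≠ a} q → w.lastHead → D.dir a b
  | _, .cons (.fwd h) (.nil _), _, ho, _ => by
      have : _ = a := not_not.1 (ho.1.2 fun h => h.2)
      exact this ▸ h
  | _, .cons (.bwd _) (.nil _), _, _, h => h.elim
  | _, .cons (.bl _) (.nil _), _, _, h => h.elim
  | _, .cons _ (.cons _ _), _, ho, hl => dir_of_muOpen_of_lastHead ho.2 hl

lemma dir_of_muConn_imp {G H : CDG V} (hmu : ∀ C a b, G.muConn C a b → H.muConn C a b)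
    (h : G.dir a b) : H.dir a b := by
  have hG : G.muConn {x | x ≠ a} a b := ⟨fun h => h rfl, cons (.fwd h) (nil b), trivial, trivial⟩
  obtain ⟨-, w, ho, hl⟩ := muConn_iff.1 (hmu _ a b hG)
  exact dir_of_muOpen_of_lastHead ho hl

/-- On a μ-open walk, a node outside the ancestral set `an(S)` that is entered through a neck
can only be left along a directed edge, which stays outside `an(S)`. -/
lemma support_subset_ancSet_of_muOpen {S : Set V} (hC : C ⊆ D.ancSet S) :
    ∀ {x y : V} {w : D.Walk x y} {q : Prop}, w.MuOpen C q → y ∈ D.ancSet S →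
      (x ∈ D.ancSet S ∨ q) → ∀ v ∈ w.support, v ∈ D.ancSet S
  | _, _, .nil _, _, _, hy, _, v, hv => by rw [List.mem_singleton.1 hv]; exact hy
  | x, _, .cons (m := m) e w, q, ho, hy, hx, v, hv => by
      have hcol : q ∧ e.neckLeft → x ∈ D.ancSet S := fun h => ancSet_subset_ancSet hC (ho.1.1 h)
      have hm : m ∈ D.ancSet S ∨ e.neckRight := by
        cases e with
        | bwd h => exact Or.inl (mem_ancSet_of_dir h (hx.elim id fun hq => hcol ⟨hq, trivial⟩))
        | fwd => exact Or.inr trivial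
        | bl => exact Or.inr trivial
      have hw := support_subset_ancSet_of_muOpen hC ho.2 hy hm
      rcases List.mem_cons.1 hv with rfl | hv
      · rcases hx with hx | hq
        · exact hx
        · rcases e.neckLeft_or_dir with hnl | h
          · exact hcol ⟨hq, hnl⟩
          · exact mem_ancSet_of_dir h (hw _ (start_mem_support w))
      · exact hw v hv

lemma exists_muOpen_of_anc {m y : V} (h : D.anc m y) (hm : m ∉ D.ancSet C) :
    ∃ σ : D.Walk m y, ∀ q, σ.MuOpen C q := by
  induction h using Relation.ReflTransGen.head_induction_on with
  | refl => exact ⟨nil y, fun _ => trivial⟩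
  | head hd _ ih =>
      obtain ⟨σ, hσ⟩ := ih fun hz => hm (mem_ancSet_of_dir hd hz)
      exact ⟨cons (.fwd hd) σ, fun q =>
        ⟨⟨fun h => h.2.elim, fun _ hmC => hm (subset_ancSet hmC)⟩, hσ True⟩⟩

lemma exists_muOpen_of_anc_reverse {u v : V} (h : D.anc v u) (hv : v ∉ D.ancSet C) {q : Prop}
    (hq : q → u ∈ D.ancSet C) : ∃ σ : D.Walk u v, σ.MuOpen C q ∧ ¬ σ.endNeck q := by
  induction h generalizing q with
  | refl => exact ⟨nil v, trivial, fun hq' => hv (hq hq')⟩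
  | tail hvz hd ih =>
      obtain ⟨σ, hσ, hend⟩ := ih (q := False) False.elim
      exact ⟨cons (.bwd hd) σ,
        ⟨⟨fun h => hq h.1, fun _ huC => hv ⟨_, huC, hvz.tail hd⟩⟩, hσ⟩, hend⟩

lemma exists_muOpen_of_colliding : ∀ {m y : V} {t : D.Walk m y} {r : Prop}, t.Colliding r →
    (∀ x ∈ t.support, D.anc x y ∨ x ∈ D.ancSet C) → ∃ σ : D.Walk m y, σ.MuOpen C r
  | _, _, .nil _, _, _, _ => ⟨nil _, trivial⟩
  | m, _, .cons e t, r, ht, hsupp => by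
      by_cases hm : m ∈ D.ancSet C
      · obtain ⟨σ, hσ⟩ :=
          exists_muOpen_of_colliding ht.2 fun x hx => hsupp x (List.mem_cons_of_mem _ hx)
        exact ⟨cons e σ, ⟨fun _ => hm, fun h => (h ht.1).elim⟩, hσ⟩
      · obtain ⟨σ, hσ⟩ :=
          exists_muOpen_of_anc ((hsupp m List.mem_cons_self).resolve_right hm) hm
        exact ⟨σ, hσ r⟩

lemma exists_muOpen_of_allColliders_of_anc {v y : V} {τ : D.Walk v y} (hτ : τ.allColliders)
    (htail : ∀ x ∈ τ.support.tail, D.anc x y ∨ x ∈ D.ancSet C) (hv : v ∉ C) {q : Prop}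
    (hq : q → v ∈ D.ancSet C) : ∃ σ : D.Walk v y, σ.MuOpen C q := by
  cases τ with
  | nil => exact ⟨nil v, trivial⟩
  | cons e t =>
      obtain ⟨σ, hσ⟩ := exists_muOpen_of_colliding ((allColliders_cons_iff e t).1 hτ) htail
      exact ⟨cons e σ, ⟨fun h => hq h.1, fun _ => hv⟩, hσ⟩

/-- Climb from `u` to the last node `v` of `τ` that is an ancestor of `u` but not of `C`, then
follow `τ`, leaving it down to `y` at the first node that is not in `an(C)`. -/
lemma exists_muOpen_of_allColliders {u y : V} {τ : D.Walk u y} (hτ : τ.allColliders)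
    (hint : ∀ x ∈ τ.internal, D.anc x u ∨ D.anc x y ∨ x ∈ D.ancSet C) (hu : u ∉ C) {q : Prop}
    (hq : q → u ∈ D.ancSet C) : ∃ σ : D.Walk u y, σ.MuOpen C q := by
  have hafter : ∀ x, x ∈ τ.internal ∨ x = y → ¬ (D.anc x u ∧ x ∉ D.ancSet C) →
      D.anc x y ∨ x ∈ D.ancSet C := by
    rintro x (hx | rfl) hP
    · rcases hint x hx with h | h | h
      · exact Or.inr (not_not.1 fun h' => hP ⟨h, h'⟩)
      · exact Or.inl h
      · exact Or.inr h
    · exact Or.inl .refl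
  rcases exists_eq_append_last (fun x => D.anc x u ∧ x ∉ D.ancSet C) τ with
    hnone | ⟨v, τ₁, τ₂, rfl, ⟨hvu, hvC⟩, hτ₂⟩
  · have huC : u ∈ D.ancSet C := not_not.1 fun h => hnone u (start_mem_support τ) ⟨.refl, h⟩
    exact exists_muOpen_of_allColliders_of_anc hτ
      (fun x hx => hafter x (mem_internal_or_eq_of_mem_support_tail hx)
        (hnone x (List.mem_of_mem_tail hx)))
      hu fun _ => huC
  · obtain ⟨σ₁, hσ₁, hend⟩ := exists_muOpen_of_anc_reverse hvu hvC hq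
    obtain ⟨σ₂, hσ₂⟩ := exists_muOpen_of_allColliders_of_anc (allColliders_append_right τ₁ hτ)
      (fun x hx => hafter x ((mem_internal_or_eq_of_mem_support_tail hx).imp_left
        (mem_internal_append_right τ₁ τ₂)) (hτ₂ x hx))
      (fun h => hvC (subset_ancSet h)) (q := σ₁.endNeck q) fun h => (hend h).elim
    exact ⟨σ₁.append σ₂, (muOpen_append σ₁ σ₂).2 ⟨hσ₁, hσ₂⟩⟩

end CDG

/-! ### Transfer between graphs with the same directed edges -/

namespace CDG

open Walk

variable {V : Type} {G H : CDG V} {C : Set V}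

lemma exists_muOpen_of_covered (hdir : ∀ a b, G.dir a b ↔ H.dir a b)
    (hcov : ∀ (α β : V) (w : G.Walk α β), IsColliderPath w → Covered G H w)
    {u y : V} {Z : G.Walk u y} (hZ : Z.allColliders) (hZC : ∀ x ∈ Z.internal, x ∈ G.ancSet C)
    (hu : u ∉ C) {q : Prop} (hq : q → u ∈ G.ancSet C) : ∃ Z' : H.Walk u y, Z'.MuOpen C q := by
  by_cases huy : u = y
  · subst huy
    exact ⟨nil u, trivial⟩
  obtain ⟨π, hπ, hsupp⟩ := exists_isColliderPath huy Z hZ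
  obtain ⟨τ, hτ, hτint⟩ := hcov u y π hπ
  rw [ancSet_congr hdir] at hq hZC hτint
  refine exists_muOpen_of_allColliders hτ.2.2 (fun x hx => ?_) hu hq
  obtain ⟨c, hc, hxc⟩ := hτint x hx
  rcases hc with (rfl | rfl) | hc
  · exact Or.inl hxc
  · exact Or.inr (Or.inl hxc)
  · rcases mem_support_iff.1 (hsupp c (mem_support_of_mem_internal hc)) with rfl | hc | rfl
    · exact Or.inl hxc
    · exact Or.inr (Or.inr (mem_ancSet_of_anc hxc (hZC c hc)))
    · exact Or.inr (Or.inl hxc)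

/-- A single directed edge is copied; any other piece is replaced through a covering collider
path. -/
lemma exists_muOpen_of_muOpen_of_internal_subset (hdir : ∀ a b, G.dir a b ↔ H.dir a b)
    (hcov : ∀ (α β : V) (w : G.Walk α β), IsColliderPath w → Covered G H w)
    {u y : V} {Z : G.Walk u y} (hZC : ∀ v ∈ Z.internal, v ∈ C) {p q : Prop}
    (ho : Z.MuOpen C p) (hu : u ∉ C) (hq : q → p ∨ u ∈ G.ancSet C) :
    ∃ Z' : H.Walk u y, Z'.MuOpen C q ∧ (Z'.endNeck q → Z.endNeck p ∨ y ∈ G.ancSet C) := by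
  have hZ := allColliders_of_muOpen ho hZC
  have hZA : ∀ v ∈ Z.internal, v ∈ G.ancSet C := fun v hv => subset_ancSet (hZC v hv)
  cases Z with
  | nil => exact ⟨nil u, trivial, hq⟩
  | cons e t =>
    have hcol : p ∧ e.neckLeft → u ∈ G.ancSet C := ho.1.1
    cases t with
    | nil =>
      cases e with
      | fwd h =>
          exact ⟨cons (.fwd ((hdir _ _).1 h)) (nil _), ⟨⟨fun h => h.2.elim, fun _ => hu⟩, trivial⟩,
            Or.inl⟩
      | bwd h =>
          refine ⟨cons (.bwd ((hdir _ _).1 h)) (nil _), ⟨⟨fun h => ?_, fun _ => hu⟩, trivial⟩,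
            Or.inl⟩
          rw [← ancSet_congr hdir]
          exact (hq h.1).elim (fun hp => hcol ⟨hp, trivial⟩) id
      | bl h =>
          obtain ⟨Z', hZ'⟩ := exists_muOpen_of_covered hdir hcov hZ hZA hu
            fun hq₀ => (hq hq₀).elim (fun hp => hcol ⟨hp, trivial⟩) id
          exact ⟨Z', hZ', fun _ => Or.inl trivial⟩
    | cons e₂ t =>
      have hm : _ ∈ C := hZC _ List.mem_cons_self
      have hqu : q → u ∈ G.ancSet C := fun hq₀ => by
        rcases e.neckLeft_or_dir with hnl | hd
        · exact (hq hq₀).elim (fun hp => hcol ⟨hp, hnl⟩) id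
        · exact mem_ancSet_of_dir hd (subset_ancSet hm)
      obtain ⟨Z', hZ'⟩ := exists_muOpen_of_covered hdir hcov hZ hZA hu hqu
      exact ⟨Z', hZ', fun _ => endNeck_or_mem_ancSet p (by simp) hZC⟩

/-- The invariant `q → p ∨ u ∈ an(C)`: the new walk enters `u` through a neck only where the
old one does, or where `u` is allowed to be a collider. -/
lemma exists_muOpen_lastHead_of_muOpen (hdir : ∀ a b, G.dir a b ↔ H.dir a b)
    (hcov : ∀ (α β : V) (w : G.Walk α β), IsColliderPath w → Covered G H w)
    {u b : V} (w : G.Walk u b) {p q : Prop} (ho : w.MuOpen C p) (hl : w.lastHead) (hu : u ∉ C)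
    (hq : q → p ∨ u ∈ G.ancSet C) : ∃ w' : H.Walk u b, w'.MuOpen C q ∧ w'.lastHead := by
  obtain ⟨n, hn⟩ : ∃ n, w.length = n := ⟨_, rfl⟩
  induction n using Nat.strong_induction_on generalizing u p q with
  | _ n ih =>
  by_cases hall : ∀ v ∈ w.internal, v ∈ C
  · obtain ⟨h, rfl⟩ := eq_cons_fwd_of_allColliders_of_lastHead (allColliders_of_muOpen ho hall) hl
    exact ⟨cons (.fwd ((hdir u b).1 h)) (nil b), ⟨⟨fun h => h.2.elim, fun _ => hu⟩, trivial⟩,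
      trivial⟩
  push Not at hall
  obtain ⟨y, Z, ρ, rfl, hy, hZ, hρ, hZC⟩ := exists_eq_append_first_not (· ∈ C) w hall
  rw [muOpen_append] at ho
  rw [lastHead_append_iff Z hρ] at hl
  obtain ⟨Z', hZ', hend⟩ := exists_muOpen_of_muOpen_of_internal_subset hdir hcov hZC ho.1 hu hq
  obtain ⟨ρ', hρ', hl'⟩ :=
    ih ρ.length (by simp only [length_append] at hn; omega) ρ ho.2 hl hy hend rfl
  exact ⟨Z'.append ρ', (muOpen_append Z' ρ').2 ⟨hZ', hρ'⟩,
    (lastHead_append_iff Z' (length_pos_of_lastHead hl')).2 hl'⟩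

lemma muConn_of_covered (hdir : ∀ a b, G.dir a b ↔ H.dir a b)
    (hcov : ∀ (α β : V) (w : G.Walk α β), IsColliderPath w → Covered G H w) {a b : V}
    (h : G.muConn C a b) : H.muConn C a b := by
  obtain ⟨ha, w, ho, hl⟩ := muConn_iff.1 h
  obtain ⟨w', ho', hl'⟩ :=
    exists_muOpen_lastHead_of_muOpen hdir hcov w ho hl ha False.elim
  exact muConn_iff.2 ⟨ha, w', ho', hl'⟩

/-- With `S` the nodes of `w` and `C = an(S) \ {α, β}`, the walk `w` followed by the loop at `β`
μ-connects `α` to `β` given `C`. A μ-connecting walk in `H` stays inside `an(S)`, so between its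
last visit to `α` and its next visit to `β` all its nodes lie in `C` and are colliders. -/
lemma covered_of_muConn_imp (hdir : ∀ a b, G.dir a b ↔ H.dir a b) (hloop : ∀ a, G.dir a a)
    (hmu : ∀ C a b, G.muConn C a b → H.muConn C a b) {α β : V} (w : G.Walk α β)
    (hw : IsColliderPath w) : Covered G H w := by
  obtain ⟨hpos, hnd, hcoll⟩ := hw
  obtain ⟨hαβ, hαint, hβint⟩ := ne_and_not_mem_internal_of_nodup hpos hnd
  set S : Set V := {α, β} ∪ {x | x ∈ w.internal}
  set C : Set V := G.ancSet S \ {α, β}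
  have hαS : α ∈ G.ancSet S := subset_ancSet (Or.inl (Set.mem_insert _ _))
  have hβS : β ∈ G.ancSet S := subset_ancSet (Or.inl (Set.mem_insert_of_mem _ rfl))
  have hαC : α ∉ C := fun h => h.2 (Set.mem_insert _ _)
  have hβC : β ∉ C := fun h => h.2 (Set.mem_insert_of_mem _ rfl)
  have hG : G.muConn C α β := muConn_of_allColliders hcoll
    (fun γ hγ => subset_ancSet ⟨subset_ancSet (Or.inr hγ), fun h => h.elim
      (fun h => hαint (h ▸ hγ)) (fun h => hβint (h ▸ hγ))⟩) hαC hβC (hloop β)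
  obtain ⟨-, ω, hω, -⟩ := muConn_iff.1 (hmu C α β hG)
  have hωS : ∀ v ∈ ω.support, v ∈ G.ancSet S := by
    rw [ancSet_congr hdir] at hαS hβS ⊢
    exact support_subset_ancSet_of_muOpen (fun x hx => ancSet_congr hdir ▸ hx.1) hω hβS (Or.inl hαS)
  obtain ⟨ω₁, ω', ω₂, rfl, hω'⟩ := exists_infix_internal_ne hαβ ω
  have hω'S : ∀ v ∈ ω'.support, v ∈ G.ancSet S := fun v hv =>
    hωS v ((mem_support_append _ _).2 (Or.inr ((mem_support_append _ _).2 (Or.inl hv))))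
  have hω'o := ((muOpen_append _ _).1 ((muOpen_append _ _).1 hω).2).1
  have hω'C : ∀ v ∈ ω'.internal, v ∈ C := fun v hv =>
    ⟨hω'S v (mem_support_of_mem_internal hv), fun h => h.elim (hω' v hv).1 (hω' v hv).2⟩
  obtain ⟨π, hπ, hsupp⟩ := exists_isColliderPath hαβ ω' (allColliders_of_muOpen hω'o hω'C)
  exact ⟨π, hπ, fun v hv => hω'S v (hsupp v (mem_support_of_mem_internal hv))⟩

end CDG

/-- Two cDGs containing every loop are Markov equivalent iff they
have the same directed edges and are collider equivalent. -/
theorem stmt6 {V : Type} (D₁ D₂ : CDG V)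
    (h1 : ∀ a, D₁.dir a a) (h2 : ∀ a, D₂.dir a a) :
    D₁.indep = D₂.indep ↔
      ((∀ a b, D₁.dir a b ↔ D₂.dir a b) ∧ ColliderEquiv D₁ D₂) := by
  rw [CDG.indep_eq_iff]
  constructor
  · intro h
    have hdir : ∀ a b, D₁.dir a b ↔ D₂.dir a b := fun a b =>
      ⟨CDG.dir_of_muConn_imp fun C x y => (h C x y).1,
        CDG.dir_of_muConn_imp fun C x y => (h C x y).2⟩
    exact ⟨hdir, fun _ _ w => CDG.covered_of_muConn_imp hdir h1 (fun C x y => (h C x y).1) w,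
      fun _ _ w => CDG.covered_of_muConn_imp (fun a b => (hdir a b).symm) h2
        (fun C x y => (h C x y).2) w⟩
  · rintro ⟨hdir, hcov₁, hcov₂⟩ C a b
    exact ⟨CDG.muConn_of_covered hdir hcov₁,
      CDG.muConn_of_covered (fun a b => (hdir a b).symm) hcov₂⟩
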